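/- arXiv:2310.11908 — 2 statements merged into one kernel-verified Lean document; each statement's English description precedes it below -/
import Mathlib

section
/- The greedy mechanism M_AP is a 2-approximation: on every instance, the weight of the maximum vertex-weighted b-matching is at most twice the weight of the matching returned by M_AP. Moreover this bound is tight: for every ε > 0 there is an instance (two agents of capacity 1, tasks of values 1+ε and 1, edges {(a_1,t_1),(a_1,t_2),(a_2,t_1)}) on which the ratio is (2+ε)/(1+ε). -/
open Classical

/-- An edge of the bipartite graph: a pair (agent, task). -/
abbrev Edge (n m : ℕ) := Fin n × Fin m

variable {n m : ℕ}

/-- Number of tasks assigned to agent `i` in the edge set `μ`. -/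
def deg (μ : Finset (Edge n m)) (i : Fin n) : ℕ := (μ.filter (fun e => e.1 = i)).card

/-- `μ` is a b-matching over the edge set `E'`: it uses only edges of `E'`, each agent `i`
receives at most `b i` tasks, and each task is matched to at most one agent. -/
def IsBMatching (b : Fin n → ℕ) (E' μ : Finset (Edge n m)) : Prop :=
  μ ⊆ E' ∧ (∀ i, deg μ i ≤ b i) ∧ ∀ j : Fin m, (μ.filter (fun e => e.2 = j)).card ≤ 1

/-- Weight of a matching: total value of matched tasks. -/
noncomputable def weight (q : Fin m → ℝ) (μ : Finset (Edge n m)) : ℝ := ∑ e ∈ μ, q e.2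

/-- Utility of agent `i`: total value of the tasks matched to `i`. -/
noncomputable def util (q : Fin m → ℝ) (i : Fin n) (μ : Finset (Edge n m)) : ℝ :=
  ∑ e ∈ μ.filter (fun e => e.1 = i), q e.2

/-- `μ` is a maximum vertex-weighted b-matching over the edge set `E'`. -/
def IsMaxMatching (b : Fin n → ℕ) (q : Fin m → ℝ) (E' μ : Finset (Edge n m)) : Prop :=
  IsBMatching b E' μ ∧ ∀ ν, IsBMatching b E' ν → weight q ν ≤ weight q μ

/-- The edges of `E` incident to agent `i`. -/
def agentEdges (E : Finset (Edge n m)) (i : Fin n) : Finset (Edge n m) :=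
  E.filter (fun e => e.1 = i)

/-- The edge set obtained from `E` when agent `i` reports `S` instead of its true edges. -/
def deviate (E : Finset (Edge n m)) (i : Fin n) (S : Finset (Edge n m)) : Finset (Edge n m) :=
  E.filter (fun e => e.1 ≠ i) ∪ S

/-- A valid report of agent `i`: a nonempty subset of its true incident edges. -/
def ValidReport (E : Finset (Edge n m)) (i : Fin n) (S : Finset (Edge n m)) : Prop :=
  S ⊆ agentEdges E i ∧ S.Nonempty
open Classical in
/-- The tasks sorted in non-increasing order of value (ties broken by index). -/
noncomputable def sortedTasks (m : ℕ) (q : Fin m → ℝ) : List (Fin m) :=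
  List.insertionSort (fun j k => q k ≤ q j) (List.finRange m)

/-- The greedy mechanism `M_AP`: process tasks in non-increasing value order, assigning each
task to the highest-priority unsaturated agent connected to it, if any. -/
noncomputable def MAP (b : Fin n → ℕ) (q : Fin m → ℝ) (E' : Finset (Edge n m)) :
    Finset (Edge n m) :=
  (sortedTasks m q).foldl (fun μ j =>
    match (List.finRange n).find? (fun i => decide ((i, j) ∈ E' ∧ deg μ i < b i)) with
    | some i => insert (i, j) μ
    | none => μ) ∅

/-- `p = [(i₁,j₁),…,(i_L,j_L)]` is an augmenting path from task `j = j₁` with respect to the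
matching `μ` in the graph `E'`: the edges `(i_ℓ, j_ℓ)` are non-matching edges of `E'`, the
edges `(i_ℓ, j_{ℓ+1})` are matching edges, all interior agents are saturated and the final
agent is unsaturated. -/
structure IsAugPathFrom (b : Fin n → ℕ) (E' μ : Finset (Edge n m)) (j : Fin m)
    (p : List (Edge n m)) : Prop where
  ne : p ≠ []
  starts : ∀ e ∈ p.head?, e.2 = j
  mem : ∀ e ∈ p, e ∈ E' ∧ e ∉ μ
  matched : ∀ k, (h : k + 1 < p.length) →
    ((p.get ⟨k, Nat.lt_of_succ_lt h⟩).1, (p.get ⟨k + 1, h⟩).2) ∈ μ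
  satInterior : ∀ k, (h : k + 1 < p.length) →
    b (p.get ⟨k, Nat.lt_of_succ_lt h⟩).1 ≤ deg μ (p.get ⟨k, Nat.lt_of_succ_lt h⟩).1
  unsatLast : ∀ e ∈ p.getLast?, deg μ e.1 < b e.1
  agentsNodup : (p.map Prod.fst).Nodup
  tasksNodup : (p.map Prod.snd).Nodup

/-- The matching edges of an augmenting path. -/
def pathMatched (p : List (Edge n m)) : List (Edge n m) :=
  (p.zip p.tail).map (fun ef => (ef.1.1, ef.2.2))

/-- Flip an augmenting path: remove its matching edges and add its non-matching edges. -/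
def applyPath (μ : Finset (Edge n m)) (p : List (Edge n m)) : Finset (Edge n m) :=
  (μ \ (pathMatched p).toFinset) ∪ p.toFinset

/-- A numeric key realizing the lexicographic order (by vertex indices) on augmenting paths. -/
def pathKey (n m : ℕ) (p : List (Edge n m)) : ℕ :=
  ((p.flatMap fun (e : Edge n m) => [e.1.val + 1, e.2.val + 1]) ++
    List.replicate (2 * n - 2 * p.length) 0).foldl (fun a d => a * (n + m + 2) + d) 0

/-- DFS explores agents in priority order and goes deep first: it returns the lexicographically
least augmenting path. -/
def dfsCost (n m : ℕ) (p : List (Edge n m)) : ℕ := pathKey n m p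

/-- BFS returns a shortest augmenting path, exploring vertices in priority order: it returns
the lexicographically least augmenting path among those of minimum length. -/
def bfsCost (n m : ℕ) (p : List (Edge n m)) : ℕ :=
  p.length * (n + m + 2) ^ (2 * n + 2) + pathKey n m p

/-- Select the cost-minimal augmenting path from task `j`, if an augmenting path exists. -/
noncomputable def selectPath (cost : List (Edge n m) → ℕ) (b : Fin n → ℕ)
    (E' μ : Finset (Edge n m)) (j : Fin m) : Option (List (Edge n m)) :=
  if h : ∃ p, IsAugPathFrom b E' μ j p ∧ ∀ p', IsAugPathFrom b E' μ j p' → cost p ≤ cost p'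
  then some h.choose else none

/-- The augmenting-path algorithm: process tasks in non-increasing value order, at each step
flipping the augmenting path found by the (deterministic) search given by `cost`. -/
noncomputable def runAug (cost : List (Edge n m) → ℕ) (b : Fin n → ℕ) (q : Fin m → ℝ)
    (E' : Finset (Edge n m)) : Finset (Edge n m) :=
  (sortedTasks m q).foldl (fun μ j =>
    match selectPath cost b E' μ j with
    | some p => applyPath μ p
    | none => μ) ∅

/-- The maximum vertex-weighted b-matching mechanism using breadth-first search. -/
noncomputable def MBFS (b : Fin n → ℕ) (q : Fin m → ℝ) (E' : Finset (Edge n m)) :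
    Finset (Edge n m) := runAug (bfsCost n m) b q E'

/-- The maximum vertex-weighted b-matching mechanism using depth-first search. -/
noncomputable def MDFS (b : Fin n → ℕ) (q : Fin m → ℝ) (E' : Finset (Edge n m)) :
    Finset (Edge n m) := runAug (dfsCost n m) b q E'

/-!
Split a b-matching `μ` according to whether the task of an edge is also matched by the greedy
output `G`. Both `μ` and `G` match each task at most once, so the edges of `μ` whose task `G`
matches weigh at most `weight G`. If the task `j` of an edge `(i, j) ∈ μ` is left unmatched by
`G`, then agent `i` was already saturated when `j` was processed, so `G` gives `i` at least
`b i ≥ deg μ i` tasks, all processed before `j` and hence at least as valuable; summing agent by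
agent, these edges of `μ` also weigh at most `weight G`.

On the tight instance greedy gives `t₁` to `a₁` and then cannot place `t₂`, while the optimum
matches both tasks.
-/

section Greedy

variable (b : Fin n → ℕ) (E' : Finset (Edge n m))

noncomputable def greedyStep (μ : Finset (Edge n m)) (j : Fin m) : Finset (Edge n m) :=
  match (List.finRange n).find? (fun i => decide ((i, j) ∈ E' ∧ deg μ i < b i)) with
  | some i => insert (i, j) μ
  | none => μ

theorem MAP_eq_foldl_greedyStep (q : Fin m → ℝ) :
    MAP b q E' = (sortedTasks m q).foldl (greedyStep b E') ∅ := rfl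

theorem greedyStep_cases (μ : Finset (Edge n m)) (j : Fin m) :
    ((∀ i, (i, j) ∈ E' → b i ≤ deg μ i) ∧ greedyStep b E' μ j = μ) ∨
      ∃ i, (i, j) ∈ E' ∧ deg μ i < b i ∧ greedyStep b E' μ j = insert (i, j) μ := by
  unfold greedyStep
  cases h : (List.finRange n).find? (fun i => decide ((i, j) ∈ E' ∧ deg μ i < b i)) with
  | none =>
    refine .inl ⟨fun i hi => ?_, rfl⟩
    simpa [hi] using List.find?_eq_none.mp h i (List.mem_finRange i)
  | some i =>
    have hi := List.find?_some h
    rw [decide_eq_true_eq] at hi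
    exact .inr ⟨i, hi.1, hi.2, rfl⟩

theorem subset_greedyStep (μ : Finset (Edge n m)) (j : Fin m) : μ ⊆ greedyStep b E' μ j := by
  rcases greedyStep_cases b E' μ j with ⟨-, h⟩ | ⟨i, -, -, h⟩ <;> rw [h]
  exact Finset.subset_insert _ _

theorem mem_or_snd_eq_of_mem_greedyStep {μ : Finset (Edge n m)} {j : Fin m} {e : Edge n m}
    (he : e ∈ greedyStep b E' μ j) : e ∈ μ ∨ e.2 = j := by
  rcases greedyStep_cases b E' μ j with ⟨-, h⟩ | ⟨i, -, -, h⟩ <;> rw [h] at he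
  · exact .inl he
  · rcases Finset.mem_insert.mp he with rfl | he
    exacts [.inr rfl, .inl he]

theorem subset_foldl_greedyStep (L : List (Fin m)) (μ : Finset (Edge n m)) :
    μ ⊆ L.foldl (greedyStep b E') μ := by
  induction L generalizing μ with
  | nil => exact subset_rfl
  | cons j L ih => exact (subset_greedyStep b E' μ j).trans (ih _)

theorem mem_or_snd_mem_of_mem_foldl_greedyStep {L : List (Fin m)} {μ : Finset (Edge n m)}
    {e : Edge n m} (he : e ∈ L.foldl (greedyStep b E') μ) : e ∈ μ ∨ e.2 ∈ L := by
  induction L generalizing μ with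
  | nil => exact .inl he
  | cons j L ih =>
    rcases ih he with h | h
    · rcases mem_or_snd_eq_of_mem_greedyStep b E' h with h | h
      exacts [.inl h, .inr (h ▸ List.mem_cons_self)]
    · exact .inr (List.mem_cons_of_mem _ h)

theorem injOn_snd_greedyStep {μ : Finset (Edge n m)} {j : Fin m}
    (hμ : Set.InjOn Prod.snd (μ : Set (Edge n m))) (hj : ∀ e ∈ μ, e.2 ≠ j) :
    Set.InjOn Prod.snd (greedyStep b E' μ j : Set (Edge n m)) := by
  rcases greedyStep_cases b E' μ j with ⟨-, h⟩ | ⟨i, -, -, h⟩ <;> rw [h]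
  · exact hμ
  · rw [Finset.coe_insert, Set.injOn_insert fun h => hj _ h rfl]
    exact ⟨hμ, fun ⟨e, he, hej⟩ => hj e he hej⟩

theorem injOn_snd_foldl_greedyStep {L : List (Fin m)} (hL : L.Nodup) {μ : Finset (Edge n m)}
    (hμ : Set.InjOn Prod.snd (μ : Set (Edge n m))) (hfresh : ∀ e ∈ μ, e.2 ∉ L) :
    Set.InjOn Prod.snd ((L.foldl (greedyStep b E') μ : Finset (Edge n m)) : Set (Edge n m)) := by
  induction L generalizing μ with
  | nil => exact hμ
  | cons j L ih =>
    rw [List.nodup_cons] at hL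
    refine ih hL.2 (injOn_snd_greedyStep b E' hμ fun e he h => hfresh e he (h ▸ List.mem_cons_self))
      fun e he => ?_
    rcases mem_or_snd_eq_of_mem_greedyStep b E' he with he | rfl
    exacts [fun h => hfresh e he (List.mem_cons_of_mem _ h), hL.1]

theorem deg_mono {μ ν : Finset (Edge n m)} (h : μ ⊆ ν) (i : Fin n) : deg μ i ≤ deg ν i :=
  Finset.card_le_card (Finset.filter_subset_filter _ h)

theorem filter_fst_greedyStep_of_saturated {μ : Finset (Edge n m)} {i : Fin n}
    (hsat : b i ≤ deg μ i) (j : Fin m) :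
    (greedyStep b E' μ j).filter (·.1 = i) = μ.filter (·.1 = i) := by
  rcases greedyStep_cases b E' μ j with ⟨-, h⟩ | ⟨i', -, hlt, h⟩ <;> rw [h]
  rw [Finset.filter_insert, if_neg]
  rintro rfl
  exact hlt.not_ge hsat

theorem filter_fst_foldl_greedyStep_of_saturated (L : List (Fin m)) {μ : Finset (Edge n m)}
    {i : Fin n} (hsat : b i ≤ deg μ i) :
    (L.foldl (greedyStep b E') μ).filter (·.1 = i) = μ.filter (·.1 = i) := by
  induction L generalizing μ with
  | nil => rfl
  | cons j L ih =>
    rw [List.foldl_cons, ih (hsat.trans (deg_mono (subset_greedyStep b E' μ j) i)),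
      filter_fst_greedyStep_of_saturated b E' hsat j]

end Greedy

section SortedTasks

variable (q : Fin m → ℝ)

theorem mem_sortedTasks (j : Fin m) : j ∈ sortedTasks m q :=
  (List.perm_insertionSort _ _).mem_iff.mpr (List.mem_finRange j)

theorem nodup_sortedTasks : (sortedTasks m q).Nodup :=
  (List.perm_insertionSort _ _).nodup_iff.mpr (List.nodup_finRange m)

theorem pairwise_sortedTasks : (sortedTasks m q).Pairwise (fun j k => q k ≤ q j) :=
  haveI : Std.Total (fun j k : Fin m => q k ≤ q j) := ⟨fun j k => le_total (q k) (q j)⟩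
  haveI : IsTrans (Fin m) (fun j k => q k ≤ q j) := ⟨fun _ _ _ h₁ h₂ => h₂.trans h₁⟩
  List.pairwise_insertionSort _ _

end SortedTasks

section MAP

variable (b : Fin n → ℕ) (q : Fin m → ℝ) (E' : Finset (Edge n m))

theorem injOn_snd_MAP : Set.InjOn Prod.snd (MAP b q E' : Set (Edge n m)) :=
  injOn_snd_foldl_greedyStep b E' (nodup_sortedTasks q) (by simp) (by simp)

theorem MAP_saturated_with_heavier_of_unmatched {e : Edge n m} (he : e ∈ E')
    (hunmatched : ¬ ∃ f ∈ MAP b q E', f.2 = e.2) :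
    b e.1 ≤ deg (MAP b q E') e.1 ∧ ∀ f ∈ MAP b q E', f.1 = e.1 → q e.2 ≤ q f.2 := by
  obtain ⟨L₁, L₂, hL⟩ := List.append_of_mem (mem_sortedTasks q e.2)
  set μ₁ := L₁.foldl (greedyStep b E') ∅
  have hMAP : MAP b q E' = L₂.foldl (greedyStep b E') (greedyStep b E' μ₁ e.2) := by
    rw [MAP_eq_foldl_greedyStep, hL, List.foldl_append, List.foldl_cons]
  obtain ⟨hsat, hstep⟩ : (∀ i, (i, e.2) ∈ E' → b i ≤ deg μ₁ i) ∧ greedyStep b E' μ₁ e.2 = μ₁ := by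
    refine (greedyStep_cases b E' μ₁ e.2).resolve_right ?_
    rintro ⟨i, -, -, h⟩
    refine hunmatched ⟨(i, e.2), ?_, rfl⟩
    rw [hMAP, h]
    exact subset_foldl_greedyStep b E' L₂ _ (Finset.mem_insert_self _ _)
  have hsat₁ : b e.1 ≤ deg μ₁ e.1 := hsat e.1 he
  rw [hMAP, hstep]
  refine ⟨hsat₁.trans (deg_mono (subset_foldl_greedyStep b E' L₂ μ₁) e.1), fun f hf hfe => ?_⟩
  have hfμ₁ : f ∈ μ₁ := by
    have hf' : f ∈ (L₂.foldl (greedyStep b E') μ₁).filter (·.1 = e.1) :=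
      Finset.mem_filter.mpr ⟨hf, hfe⟩
    rw [filter_fst_foldl_greedyStep_of_saturated b E' L₂ hsat₁] at hf'
    exact (Finset.mem_filter.mp hf').1
  have hfL₁ : f.2 ∈ L₁ :=
    (mem_or_snd_mem_of_mem_foldl_greedyStep b E' hfμ₁).resolve_left (Finset.notMem_empty f)
  have hsorted := pairwise_sortedTasks q
  rw [hL, List.pairwise_append] at hsorted
  exact hsorted.2.2 f.2 hfL₁ e.2 List.mem_cons_self

end MAP

section Weight

variable {q : Fin m → ℝ}

theorem injOn_snd_of_isBMatching {b : Fin n → ℕ} {E' μ : Finset (Edge n m)}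
    (hμ : IsBMatching b E' μ) : Set.InjOn Prod.snd (μ : Set (Edge n m)) :=
  fun e he f hf hef => Finset.card_le_one.mp (hμ.2.2 f.2) e (Finset.mem_filter.mpr ⟨he, hef⟩) f
    (Finset.mem_filter.mpr ⟨hf, rfl⟩)

theorem weight_le_of_image_snd_subset (hq : ∀ j, 0 ≤ q j) {μ ν : Finset (Edge n m)}
    (hμ : Set.InjOn Prod.snd (μ : Set (Edge n m))) (hν : Set.InjOn Prod.snd (ν : Set (Edge n m)))
    (h : μ.image Prod.snd ⊆ ν.image Prod.snd) : weight q μ ≤ weight q ν := by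
  rw [weight, weight, ← Finset.sum_image hμ, ← Finset.sum_image hν]
  exact Finset.sum_le_sum_of_subset_of_nonneg h fun j _ _ => hq j

theorem sum_util_eq_weight (μ : Finset (Edge n m)) : ∑ i, util q i μ = weight q μ :=
  Finset.sum_fiberwise μ Prod.fst _

theorem sum_le_util_of_forall_le (hq : ∀ j, 0 ≤ q j) {A G : Finset (Edge n m)} {i : Fin n}
    (hcard : A.card ≤ deg G i) (hle : ∀ e ∈ A, ∀ f ∈ G, f.1 = i → q e.2 ≤ q f.2) :
    ∑ e ∈ A, q e.2 ≤ util q i G := by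
  rcases (G.filter (·.1 = i)).eq_empty_or_nonempty with hG | hG
  · have hA : A = ∅ := Finset.card_eq_zero.mp (by simpa [deg, hG] using hcard)
    simp [hA, util, hG]
  · obtain ⟨f₀, hf₀, hmin⟩ := Finset.exists_min_image _ (fun f => q f.2) hG
    obtain ⟨hf₀G, hf₀i⟩ := Finset.mem_filter.mp hf₀
    calc ∑ e ∈ A, q e.2 ≤ A.card • q f₀.2 :=
          Finset.sum_le_card_nsmul _ _ _ fun e he => hle e he f₀ hf₀G hf₀i
      _ ≤ deg G i • q f₀.2 := nsmul_le_nsmul_left (hq _) hcard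
      _ ≤ util q i G := Finset.card_nsmul_le_sum _ _ _ hmin

end Weight

section Approximation

variable {b : Fin n → ℕ} {q : Fin m → ℝ} {E μ : Finset (Edge n m)}

theorem weight_matched_le_weight_MAP (hq : ∀ j, 0 ≤ q j) (hμ : IsBMatching b E μ) :
    weight q (μ.filter fun e => ∃ f ∈ MAP b q E, f.2 = e.2) ≤ weight q (MAP b q E) := by
  refine weight_le_of_image_snd_subset hq ((injOn_snd_of_isBMatching hμ).mono (Finset.coe_subset.mpr (Finset.filter_subset _ _)))
    (injOn_snd_MAP b q E) fun j hj => ?_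
  obtain ⟨e, he, rfl⟩ := Finset.mem_image.mp hj
  obtain ⟨f, hf, hfe⟩ := (Finset.mem_filter.mp he).2
  exact Finset.mem_image.mpr ⟨f, hf, hfe⟩

theorem weight_unmatched_le_weight_MAP (hq : ∀ j, 0 ≤ q j) (hμ : IsBMatching b E μ) :
    weight q (μ.filter fun e => ¬ ∃ f ∈ MAP b q E, f.2 = e.2) ≤ weight q (MAP b q E) := by
  set U := μ.filter fun e => ¬ ∃ f ∈ MAP b q E, f.2 = e.2
  have hsat : ∀ e ∈ U, b e.1 ≤ deg (MAP b q E) e.1 ∧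
      ∀ f ∈ MAP b q E, f.1 = e.1 → q e.2 ≤ q f.2 := fun e he =>
    MAP_saturated_with_heavier_of_unmatched b q E (hμ.1 (Finset.mem_filter.mp he).1) (Finset.mem_filter.mp he).2
  rw [← sum_util_eq_weight (MAP b q E), weight, ← Finset.sum_fiberwise U Prod.fst]
  refine Finset.sum_le_sum fun i _ => sum_le_util_of_forall_le hq ?_ fun e he f hf hfi => ?_
  · rcases (U.filter (·.1 = i)).eq_empty_or_nonempty with h | ⟨e, he⟩
    · simp [h]
    · obtain ⟨heU, rfl⟩ := Finset.mem_filter.mp he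
      calc (U.filter (·.1 = e.1)).card ≤ deg μ e.1 :=
            Finset.card_le_card (Finset.filter_subset_filter _ (Finset.filter_subset _ _))
        _ ≤ b e.1 := hμ.2.1 e.1
        _ ≤ deg (MAP b q E) e.1 := (hsat e heU).1
  · obtain ⟨heU, rfl⟩ := Finset.mem_filter.mp he
    exact (hsat e heU).2 f hf hfi

theorem weight_le_two_mul_weight_MAP (hq : ∀ j, 0 ≤ q j) (hμ : IsBMatching b E μ) :
    weight q μ ≤ 2 * weight q (MAP b q E) :=
  calc weight q μ = weight q (μ.filter fun e => ∃ f ∈ MAP b q E, f.2 = e.2) +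
        weight q (μ.filter fun e => ¬ ∃ f ∈ MAP b q E, f.2 = e.2) :=
        (Finset.sum_filter_add_sum_filter_not _ _ _).symm
    _ ≤ weight q (MAP b q E) + weight q (MAP b q E) :=
        add_le_add (weight_matched_le_weight_MAP hq hμ) (weight_unmatched_le_weight_MAP hq hμ)
    _ = 2 * weight q (MAP b q E) := (two_mul _).symm

end Approximation

section TightInstance

variable {ε : ℝ}

theorem sortedTasks_tight (hε : 0 < ε) : sortedTasks 2 ![1 + ε, 1] = [0, 1] := by
  have hfinRange : List.finRange 2 = [0, 1] := by decide
  simp [sortedTasks, hfinRange, List.insertionSort, hε.le]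

theorem MAP_tight (hε : 0 < ε) :
    MAP (fun _ => 1) ![1 + ε, 1] ({(0,0),(0,1),(1,0)} : Finset (Edge 2 2)) = {(0, 0)} := by
  rw [MAP_eq_foldl_greedyStep, sortedTasks_tight hε]
  decide

theorem isMaxMatching_tight (hε : 0 < ε) :
    IsMaxMatching (fun _ => 1) ![1 + ε, 1] ({(0,0),(0,1),(1,0)} : Finset (Edge 2 2))
      {(0, 1), (1, 0)} := by
  have hopt : IsBMatching (fun _ => 1) ({(0,0),(0,1),(1,0)} : Finset (Edge 2 2))
      {(0, 1), (1, 0)} := ⟨by decide, by decide, by decide⟩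
  refine ⟨hopt, fun ν hν => weight_le_of_image_snd_subset ?_ (injOn_snd_of_isBMatching hν)
    (injOn_snd_of_isBMatching hopt) ?_⟩
  · intro j
    fin_cases j <;> simp [hε.le, add_nonneg]
  · intro j _
    fin_cases j <;> decide

end TightInstance

/-- `M_AP` is a 2-approximation: on every instance the maximum-weight
b-matching weighs at most twice `M_AP`'s output; and the bound is tight: for every `ε > 0`,
on the instance with two agents of capacity 1, tasks of values `1+ε` and `1`, and edges
`{(a₁,t₁),(a₁,t₂),(a₂,t₁)}`, the ratio is `(2+ε)/(1+ε)`. -/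
theorem MAP_two_approximation :
    (∀ (n m : ℕ) (b : Fin n → ℕ) (q : Fin m → ℝ), (∀ j, 0 < q j) →
      ∀ (E μ : Finset (Edge n m)), IsMaxMatching b q E μ →
        weight q μ ≤ 2 * weight q (MAP b q E)) ∧
    (∀ ε : ℝ, 0 < ε →
      ∃ μ : Finset (Edge 2 2),
        IsMaxMatching (fun _ => 1) ![1 + ε, 1] ({(0,0),(0,1),(1,0)} : Finset (Edge 2 2)) μ ∧
        weight ![1 + ε, 1] μ /
            weight ![1 + ε, 1] (MAP (fun _ => 1) ![1 + ε, 1] ({(0,0),(0,1),(1,0)} : Finset (Edge 2 2))) =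
          (2 + ε) / (1 + ε)) := by
  refine ⟨fun n m b q hq E μ hμ => weight_le_two_mul_weight_MAP (fun j => (hq j).le) hμ.1,
    fun ε hε => ⟨{(0, 1), (1, 0)}, isMaxMatching_tight hε, ?_⟩⟩
  rw [MAP_tight hε, weight, weight, Finset.sum_pair (by decide), Finset.sum_singleton]
  show (1 + (1 + ε)) / (1 + ε) = (2 + ε) / (1 + ε)
  ring
end

section
/- Define the First-Come-First-Served (FCFS) policies iteratively: T⁽⁰⁾ = T, and B_i is the set of the top b_i valued tasks in T⁽ⁱ⁻¹⁾ connected to agent a_i (or all such tasks if fewer than b_i), with T⁽ⁱ⁾ = T⁽ⁱ⁻¹⁾ \ B_i; agent a_i's FCFS policy is to report only the edges {(a_i, t) : t ∈ B_i}. Then the union ∪_i FCFSP_i of all FCFS policies is itself a b-matching, and the maximum-weight b-matching mechanism (via BFS or DFS) applied to the input ∪_i FCFSP_i returns exactly ∪_i FCFSP_i. -/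
open Classical

variable {n m : ℕ}

open Classical in
/-- The top `k` valued tasks (ties broken by index) among a set `c` of tasks. -/
noncomputable def topTasks (q : Fin m → ℝ) (c : Finset (Fin m)) (k : ℕ) : Finset (Fin m) :=
  ((List.insertionSort (fun j j' => q j' ≤ q j)
    ((List.finRange m).filter (fun j => decide (j ∈ c)))).take k).toFinset

/-- `remTasks b q E k` is the set `T⁽ᵏ⁾` of tasks remaining after the first `k` agents took
their FCFS shares: `T⁽⁰⁾ = T` and `T⁽ⁱ⁾ = T⁽ⁱ⁻¹⁾ \ Bᵢ`. -/
noncomputable def remTasks (b : Fin n → ℕ) (q : Fin m → ℝ) (E : Finset (Edge n m)) :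
    ℕ → Finset (Fin m)
  | 0 => Finset.univ
  | k + 1 =>
    if h : k < n then
      remTasks b q E k \
        topTasks q ((remTasks b q E k).filter (fun j => (⟨k, h⟩, j) ∈ E)) (b ⟨k, h⟩)
    else remTasks b q E k

/-- The First-Come-First-Served policy of agent `i`: report only the edges to its top `b i`
valued tasks among those remaining after the higher-priority agents' FCFS policies. -/
noncomputable def FCFSP (b : Fin n → ℕ) (q : Fin m → ℝ) (E : Finset (Edge n m)) (i : Fin n) :
    Finset (Edge n m) :=
  (topTasks q ((remTasks b q E i.val).filter (fun j => (i, j) ∈ E)) (b i)).image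
    (fun j => (i, j))

/-- The union of all agents' FCFS policies. -/
noncomputable def FCFSunion (b : Fin n → ℕ) (q : Fin m → ℝ) (E : Finset (Edge n m)) :
    Finset (Edge n m) :=
  Finset.univ.biUnion (FCFSP b q E)

/-!
Agent `i` takes its tasks from `T⁽ⁱ⁾` and removes them from `T⁽ⁱ⁺¹⁾ ⊇ T⁽ⁱ'⁾` for every later
agent `i'`, so distinct FCFS policies use disjoint tasks and their union is a b-matching.

On an input graph `E'` that is itself a b-matching every task has at most one edge, so an
augmenting path cannot continue past its first agent: the only augmenting path from a fresh
task is its own edge, whose agent is still unsaturated. By induction along the task order, the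
partial matching is always the set of input edges at the tasks processed so far, whichever path
the search (BFS or DFS) prefers; at the end it is `E'` itself.
-/

section Policies

variable {b : Fin n → ℕ} {q : Fin m → ℝ} {E : Finset (Edge n m)}

theorem topTasks_subset (q : Fin m → ℝ) (c : Finset (Fin m)) (k : ℕ) : topTasks q c k ⊆ c := by
  intro j hj
  simp only [topTasks, List.mem_toFinset] at hj
  simpa using (List.perm_insertionSort _ _).mem_iff.1 (List.take_subset _ _ hj)

theorem card_topTasks_le (q : Fin m → ℝ) (c : Finset (Fin m)) (k : ℕ) :
    (topTasks q c k).card ≤ k :=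
  (List.toFinset_card_le _).trans (List.length_take_le _ _)

theorem remTasks_antitone (b : Fin n → ℕ) (q : Fin m → ℝ) (E : Finset (Edge n m)) :
    Antitone (remTasks b q E) := by
  refine antitone_nat_of_succ_le fun k => ?_
  rw [remTasks]
  split
  · exact Finset.sdiff_subset
  · exact subset_rfl

theorem mem_FCFSP {i : Fin n} {e : Edge n m} :
    e ∈ FCFSP b q E i ↔
      e.1 = i ∧ e.2 ∈ topTasks q ((remTasks b q E i).filter (fun j => (i, j) ∈ E)) (b i) := by
  constructor
  · intro h
    obtain ⟨j, hj, rfl⟩ := Finset.mem_image.1 h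
    exact ⟨rfl, hj⟩
  · rintro ⟨rfl, h⟩
    exact Finset.mem_image.2 ⟨e.2, h, rfl⟩

theorem FCFSP_subset (i : Fin n) : FCFSP b q E i ⊆ E := by
  intro e he
  obtain ⟨rfl, h⟩ := mem_FCFSP.1 he
  exact (Finset.mem_filter.1 (topTasks_subset _ _ _ h)).2

theorem filter_fst_FCFSunion (i : Fin n) :
    (FCFSunion b q E).filter (fun e => e.1 = i) = FCFSP b q E i := by
  ext e
  simp only [FCFSunion, Finset.mem_filter, Finset.mem_biUnion, Finset.mem_univ, true_and]
  constructor
  · rintro ⟨⟨i', he⟩, rfl⟩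
    rwa [(mem_FCFSP.1 he).1]
  · exact fun he => ⟨⟨i, he⟩, (mem_FCFSP.1 he).1⟩

theorem snd_ne_of_mem_FCFSP_of_lt {i i' : Fin n} {e f : Edge n m} (hlt : i < i')
    (he : e ∈ FCFSP b q E i) (hf : f ∈ FCFSP b q E i') : e.2 ≠ f.2 := by
  intro hef
  have hrem : f.2 ∈ remTasks b q E (i + 1) :=
    remTasks_antitone b q E (Nat.succ_le_of_lt hlt)
      (Finset.mem_filter.1 (topTasks_subset _ _ _ (mem_FCFSP.1 hf).2)).1
  rw [remTasks, dif_pos i.isLt, ← hef] at hrem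
  exact (Finset.mem_sdiff.1 hrem).2 (mem_FCFSP.1 he).2

theorem FCFSunion_isBMatching (b : Fin n → ℕ) (q : Fin m → ℝ) (E : Finset (Edge n m)) :
    IsBMatching b E (FCFSunion b q E) := by
  refine ⟨Finset.biUnion_subset.2 fun i _ => FCFSP_subset i, fun i => ?_, fun j => ?_⟩
  · rw [deg, filter_fst_FCFSunion]
    exact Finset.card_image_le.trans (card_topTasks_le _ _ _)
  · refine Finset.card_le_one.2 fun e he f hf => ?_
    simp only [FCFSunion, Finset.mem_filter, Finset.mem_biUnion, Finset.mem_univ,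
      true_and] at he hf
    obtain ⟨⟨i, hei⟩, rfl⟩ := he
    obtain ⟨⟨i', hfi'⟩, hfj⟩ := hf
    rcases lt_trichotomy i i' with hlt | rfl | hlt
    · exact absurd hfj.symm (snd_ne_of_mem_FCFSP_of_lt hlt hei hfi')
    · exact Prod.ext ((mem_FCFSP.1 hei).1.trans (mem_FCFSP.1 hfi').1.symm) hfj.symm
    · exact absurd hfj (snd_ne_of_mem_FCFSP_of_lt hlt hfi' hei)

end Policies

section Mechanism

variable {b : Fin n → ℕ} {E' μ : Finset (Edge n m)}

theorem eq_of_mem_of_snd_eq (htask : ∀ j : Fin m, (E'.filter (fun e => e.2 = j)).card ≤ 1)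
    {e f : Edge n m} (he : e ∈ E') (hf : f ∈ E') (h : e.2 = f.2) : e = f :=
  Finset.card_le_one.1 (htask f.2) e (Finset.mem_filter.2 ⟨he, h⟩) f
    (Finset.mem_filter.2 ⟨hf, rfl⟩)

/-- In a graph where every task has at most one edge, the matching edge `(i₁, j₂)` of an
augmenting path of length `≥ 2` would coincide with its non-matching edge `(i₂, j₂)`. -/
theorem IsAugPathFrom.exists_eq_singleton (hμ : μ ⊆ E')
    (htask : ∀ j : Fin m, (E'.filter (fun e => e.2 = j)).card ≤ 1) {j : Fin m}
    {p : List (Edge n m)} (hp : IsAugPathFrom b E' μ j p) : ∃ e, p = [e] := by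
  match p, hp with
  | [e], _ => exact ⟨e, rfl⟩
  | e :: f :: r, hp =>
    have hmatched : (e.1, f.2) ∈ μ := hp.matched 0 (by simp)
    have hf := hp.mem f (by simp)
    exact absurd (eq_of_mem_of_snd_eq htask (hμ hmatched) hf.1 rfl ▸ hmatched) hf.2

theorem isAugPathFrom_singleton {j : Fin m} {e : Edge n m} (he : e ∈ E') (hej : e.2 = j)
    (heμ : e ∉ μ) (hdeg : deg μ e.1 < b e.1) : IsAugPathFrom b E' μ j [e] where
  ne := List.cons_ne_nil _ _
  starts := by simpa using hej
  mem := by simpa using ⟨he, heμ⟩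
  matched := by simp
  satInterior := by simp
  unsatLast := by simpa using hdeg
  agentsNodup := List.nodup_singleton _
  tasksNodup := List.nodup_singleton _

theorem selectPath_eq_some {cost : List (Edge n m) → ℕ} {j : Fin m} {p : List (Edge n m)}
    (h : ∀ p', IsAugPathFrom b E' μ j p' ↔ p' = p) : selectPath cost b E' μ j = some p := by
  have hex : ∃ p₀, IsAugPathFrom b E' μ j p₀ ∧
      ∀ p', IsAugPathFrom b E' μ j p' → cost p₀ ≤ cost p' :=
    ⟨p, (h p).2 rfl, fun p' hp' => ((h p').1 hp') ▸ le_rfl⟩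
  rw [selectPath, dif_pos hex, (h _).1 hex.choose_spec.1]

theorem selectPath_eq_none {cost : List (Edge n m) → ℕ} {j : Fin m}
    (h : ∀ p, ¬ IsAugPathFrom b E' μ j p) : selectPath cost b E' μ j = none :=
  dif_neg fun ⟨p, hp, _⟩ => h p hp

theorem applyPath_singleton (μ : Finset (Edge n m)) (e : Edge n m) :
    applyPath μ [e] = insert e μ := by
  ext; simp [applyPath, pathMatched]

noncomputable def augStep (cost : List (Edge n m) → ℕ) (b : Fin n → ℕ)
    (E' μ : Finset (Edge n m)) (j : Fin m) : Finset (Edge n m) :=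
  match selectPath cost b E' μ j with
  | some p => applyPath μ p
  | none => μ

theorem runAug_eq_foldl_augStep (cost : List (Edge n m) → ℕ) (b : Fin n → ℕ) (q : Fin m → ℝ)
    (E' : Finset (Edge n m)) :
    runAug cost b q E' = (sortedTasks m q).foldl (augStep cost b E') ∅ :=
  rfl

theorem augStep_filter_mem (cost : List (Edge n m) → ℕ) (hE' : IsBMatching b E' E')
    {done : Finset (Fin m)} {j : Fin m} (hj : j ∉ done) :
    augStep cost b E' (E'.filter (fun e => e.2 ∈ done)) j =
      E'.filter (fun e => e.2 ∈ insert j done) := by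
  obtain ⟨-, hdeg, htask⟩ := hE'
  set μ := E'.filter (fun e => e.2 ∈ done)
  have hμ : μ ⊆ E' := Finset.filter_subset _ _
  by_cases hex : ∃ e ∈ E', e.2 = j
  · obtain ⟨e, he, hej⟩ := hex
    have heμ : e ∉ μ := fun h => hj (hej ▸ (Finset.mem_filter.1 h).2)
    have hdeg_lt : deg μ e.1 < b e.1 := by
      refine (Finset.card_lt_card ?_).trans_le (hdeg e.1)
      exact (Finset.ssubset_iff_of_subset (Finset.filter_subset_filter _ hμ)).2
        ⟨e, Finset.mem_filter.2 ⟨he, rfl⟩, fun h => heμ (Finset.mem_filter.1 h).1⟩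
    have hpaths : ∀ p, IsAugPathFrom b E' μ j p ↔ p = [e] := by
      refine fun p => ⟨fun hp => ?_, fun hp => hp ▸ isAugPathFrom_singleton he hej heμ hdeg_lt⟩
      obtain ⟨f, rfl⟩ := hp.exists_eq_singleton hμ htask
      have hf := hp.mem f (by simp)
      rw [eq_of_mem_of_snd_eq htask hf.1 he ((hp.starts f rfl).trans hej.symm)]
    simp only [augStep, selectPath_eq_some hpaths, applyPath_singleton]
    ext f
    simp only [μ, Finset.mem_insert, Finset.mem_filter]
    constructor
    · rintro (rfl | ⟨hf, hfd⟩)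
      · exact ⟨he, Or.inl hej⟩
      · exact ⟨hf, Or.inr hfd⟩
    · rintro ⟨hf, hfj | hfd⟩
      · exact Or.inl (eq_of_mem_of_snd_eq htask hf he (hfj.trans hej.symm))
      · exact Or.inr ⟨hf, hfd⟩
  · push Not at hex
    have hpaths : ∀ p, ¬ IsAugPathFrom b E' μ j p := fun p hp => by
      obtain ⟨f, rfl⟩ := hp.exists_eq_singleton hμ htask
      exact hex f (hp.mem f (by simp)).1 (hp.starts f rfl)
    simp only [augStep, selectPath_eq_none hpaths]
    ext f
    simp only [μ, Finset.mem_filter, Finset.mem_insert]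
    exact and_congr_right fun hf => (or_iff_right (hex f hf)).symm

theorem foldl_augStep_filter_mem (cost : List (Edge n m) → ℕ) (hE' : IsBMatching b E' E')
    {L : List (Fin m)} (hL : L.Nodup) {done : Finset (Fin m)} (hdone : ∀ j ∈ L, j ∉ done) :
    L.foldl (augStep cost b E') (E'.filter (fun e => e.2 ∈ done)) =
      E'.filter (fun e => e.2 ∈ done ∪ L.toFinset) := by
  induction L generalizing done with
  | nil => simp
  | cons j L ih =>
    obtain ⟨hjL, hL⟩ := List.nodup_cons.1 hL
    rw [List.foldl_cons, augStep_filter_mem cost hE' (hdone j (by simp)),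
      ih hL fun k hk => by
        simpa only [Finset.mem_insert, not_or] using
          ⟨fun h : k = j => hjL (h ▸ hk), hdone k (by simp [hk])⟩]
    congr 1
    ext k
    simp

theorem runAug_eq_self (cost : List (Edge n m) → ℕ) (q : Fin m → ℝ)
    (hE' : IsBMatching b E' E') :
    runAug cost b q E' = E' := by
  have hperm := List.perm_insertionSort (fun j k => q k ≤ q j) (List.finRange m)
  have hnodup : (sortedTasks m q).Nodup := hperm.nodup_iff.2 (List.nodup_finRange m)
  have hmem (j : Fin m) : j ∈ (sortedTasks m q).toFinset := by
    simp [sortedTasks, hperm.mem_iff]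
  have hempty : (∅ : Finset (Edge n m)) = E'.filter (fun e => e.2 ∈ (∅ : Finset (Fin m))) := by
    simp
  rw [runAug_eq_foldl_augStep, hempty, foldl_augStep_filter_mem cost hE' hnodup (by simp)]
  simp [hmem]

end Mechanism

theorem FCFS_union_is_fixed_point_general (n m : ℕ) (b : Fin n → ℕ) (q : Fin m → ℝ)
    (E : Finset (Edge n m)) :
    IsBMatching b E (FCFSunion b q E) ∧
    MBFS b q (FCFSunion b q E) = FCFSunion b q E ∧
    MDFS b q (FCFSunion b q E) = FCFSunion b q E := by
  have hmatching := FCFSunion_isBMatching b q E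
  have hself : IsBMatching b (FCFSunion b q E) (FCFSunion b q E) := ⟨subset_rfl, hmatching.2⟩
  exact ⟨hmatching, runAug_eq_self _ q hself, runAug_eq_self _ q hself⟩

/-- The union of the agents' First-Come-First-Served policies is itself a
b-matching (over the true edge set), and the maximum-weight b-matching mechanism — via BFS or
DFS — applied to the input `∪ᵢ FCFSPᵢ` returns exactly `∪ᵢ FCFSPᵢ`. -/
theorem FCFS_union_is_fixed_point (n m : ℕ) (b : Fin n → ℕ) (q : Fin m → ℝ)
    (hq : ∀ j, 0 < q j) (E : Finset (Edge n m)) :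
    IsBMatching b E (FCFSunion b q E) ∧
    MBFS b q (FCFSunion b q E) = FCFSunion b q E ∧
    MDFS b q (FCFSunion b q E) = FCFSunion b q E :=
  FCFS_union_is_fixed_point_general n m b q E
end
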